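/- arXiv:2408.02967 — 6 statements merged into one kernel-verified Lean document; each statement's English description precedes it below -/
import Mathlib

section
/- Let p be a prime and let F be a closed subset of the ring ℤ_p of p-adic integers. Then the upper Banach density of the projection Π_p(F) = F ∩ ℤ satisfies d*(F ∩ ℤ) ≤ μ_p(F), where μ_p is the Haar probability measure on ℤ_p. -/
open MeasureTheory Filter Set Metric
open scoped ENNReal NNReal

noncomputable section

/-- Number of elements of `E` in the integer interval `(M, M+n]`. -/
def cnt (E : Set ℤ) (M : ℤ) (n : ℕ) : ℕ := (E ∩ Set.Ioc M (M + n)).ncard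

/-- The `s`-counting measure `ℋ_s(E) = limsup_{|I|→∞} |E ∩ I| / |I|^s`,
where `I` ranges over integer intervals `(M, N]`. -/
def countingMeasure (s : ℝ) (E : Set ℤ) : ℝ≥0∞ :=
  Filter.atTop.limsup fun n : ℕ => ⨆ M : ℤ, (cnt E M n : ℝ≥0∞) / (n : ℝ≥0∞) ^ s

/-- The upper Banach density `d*(E) = limsup_{|I|→∞} |E ∩ I| / |I|`. -/
def upperBanachDensity (E : Set ℤ) : ℝ≥0∞ := countingMeasure 1 E

variable (p : ℕ) [Fact p.Prime]

instance : MeasurableSpace ℤ_[p] := borel ℤ_[p]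
instance : BorelSpace ℤ_[p] := ⟨rfl⟩

/-- Projection `Π_p(F) = F ∩ ℤ` of a set `F ⊆ ℤ_p`, as a set of integers. -/
def proj (F : Set ℤ_[p]) : Set ℤ := {m : ℤ | (m : ℤ_[p]) ∈ F}

/-- The closed ball of radius `p^{-n}` around `x` in `ℤ_p`. -/
def pball (x : ℤ_[p]) (n : ℕ) : Set ℤ_[p] := Metric.closedBall x ((p : ℝ) ^ (-(n : ℤ)))

/-- `limsup_{|I|→∞} |A ∩ B ∩ I| / |B ∩ I|^s` for sets of integers `A, B`. -/
def relCount (s : ℝ) (A B : Set ℤ) : ℝ≥0∞ :=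
  Filter.atTop.limsup fun n : ℕ => ⨆ M : ℤ, (cnt (A ∩ B) M n : ℝ≥0∞) / (cnt B M n : ℝ≥0∞) ^ s

/-- `η_s(F; x, n) = limsup_{|I|→∞} |F ∩ B_{p^{-n}}(x) ∩ I| / |B_{p^{-n}}(x) ∩ I|^s`. -/
def etaN (s : ℝ) (F : Set ℤ_[p]) (x : ℤ_[p]) (n : ℕ) : ℝ≥0∞ :=
  relCount s (proj p F) (proj p (pball p x n))

/-- The `s`-counting local measure `η_s(F; x) = limsup_{n→∞} η_s(F; x, n)`. -/
def eta (s : ℝ) (F : Set ℤ_[p]) (x : ℤ_[p]) : ℝ≥0∞ :=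
  Filter.atTop.limsup fun n : ℕ => etaN p s F x n

/-- `N_{p^{-n}}(F)`: minimal number of closed balls of radius `p^{-n}` covering `F`. -/
def coverNumber (F : Set ℤ_[p]) (n : ℕ) : ℕ :=
  sInf {k : ℕ | ∃ t : Finset ℤ_[p], t.card = k ∧
    F ⊆ ⋃ x ∈ t, Metric.closedBall x ((p : ℝ) ^ (-(n : ℤ)))}

/-- Upper box-counting dimension of `F ⊆ ℤ_p`. -/
def upperBoxDim (F : Set ℤ_[p]) : ℝ :=
  Filter.atTop.limsup fun n : ℕ => Real.log (coverNumber p F n) / (n * Real.log p)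

/-- Lower box-counting dimension of `F ⊆ ℤ_p`. -/
def lowerBoxDim (F : Set ℤ_[p]) : ℝ :=
  Filter.atTop.liminf fun n : ℕ => Real.log (coverNumber p F n) / (n * Real.log p)

/-- Maximal number of points of `E` in an integer interval of length `n`. -/
def maxCnt (E : Set ℤ) (n : ℕ) : ℕ := sSup {k : ℕ | ∃ M : ℤ, cnt E M n = k}

/-- The counting dimension `D(E) = limsup_{|I|→∞} log |E ∩ I| / log |I|`. -/
def countingDim (E : Set ℤ) : ℝ :=
  Filter.atTop.limsup fun n : ℕ => Real.log (maxCnt E n) / Real.log n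

/-- `θ̲*^s(F) = limsup_n min_{a ∈ G_n} ℋ^s(F ∩ B_{p^{-n}}(a)) / p^{-ns}`, where the
minimum runs over residues `a` whose ball `B_{p^{-n}}(a)` meets `F`. -/
def thetaStar (s : ℝ) (F : Set ℤ_[p]) : ℝ≥0∞ :=
  Filter.atTop.limsup fun n : ℕ =>
    ⨅ (a : ℤ) (_ : (pball p (a : ℤ_[p]) n ∩ F).Nonempty),
      μH[s] (F ∩ pball p (a : ℤ_[p]) n) / (p : ℝ≥0∞) ^ (-((n : ℝ) * s))

/-- A finite arithmetic progression in `ℤ` with common difference `d`. -/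
def IsAPWithDiff (A : Set ℤ) (d : ℤ) : Prop :=
  ∃ a : ℤ, ∃ L : ℕ, A = (fun i : ℕ => a + d * (i : ℤ)) '' {i : ℕ | i < L}

/-!
Fix `n`. The integers in `F` lie in the residue classes mod `p ^ n` met by `F`; if there are `k`
of them, every interval of length `N` contains at most `k (N / p ^ n + 1)` such integers, so
`d*(F ∩ ℤ) ≤ k / p ^ n`. The same `k` classes form a union of `k` balls of radius `p ^ (-n)`, of
Haar measure `k / p ^ n`, contained in the closed `p ^ (-n)`-thickening of `F`. As `n → ∞` the
measure of these thickenings tends to `μ F` because `F` is closed.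
-/

open scoped Topology

section IntegerCounting

open Finset

theorem card_filter_Ioc_intCast_eq_le {q : ℕ} [NeZero q] (M : ℤ) (N : ℕ) (s : ZMod q) :
    #{m ∈ Finset.Ioc M (M + N) | ((m : ℤ) : ZMod q) = s} ≤ N / q + 1 := by
  have hq : (0 : ℤ) < q := by exact_mod_cast Nat.pos_of_neZero q
  -- an element of the residue class is determined by its quotient block `(m - (M + 1)) / q`
  refine (card_le_card_of_injOn (fun m => ((m - (M + 1)) / q).toNat)
    (t := range (N / q + 1)) ?_ ?_).trans (card_range _).le
  · intro m hm
    simp only [coe_filter, Set.mem_ofPred_eq, Finset.mem_Ioc] at hm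
    simp only [coe_range, Set.mem_Iio, Nat.lt_succ_iff, Int.toNat_le, Int.natCast_div]
    exact Int.ediv_le_ediv hq (by omega)
  · intro m hm m' hm' hquot
    simp only [coe_filter, Set.mem_ofPred_eq, Finset.mem_Ioc] at hm hm'
    have hrem : (m - (M + 1)) % q = (m' - (M + 1)) % q :=
      ((ZMod.intCast_eq_intCast_iff m m' q).mp (hm.2.trans hm'.2.symm)).sub_right (M + 1)
    have hdiv : (m - (M + 1)) / q = (m' - (M + 1)) / q := by
      have := congrArg (Nat.cast : ℕ → ℤ) hquot
      rwa [Int.toNat_of_nonneg (Int.ediv_nonneg (by omega) hq.le),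
        Int.toNat_of_nonneg (Int.ediv_nonneg (by omega) hq.le)] at this
    have h := Int.emod_add_mul_ediv (m - (M + 1)) q
    have h' := Int.emod_add_mul_ediv (m' - (M + 1)) q
    rw [hrem, hdiv] at h
    linarith

theorem cnt_le_of_forall_intCast_mem {E : Set ℤ} {q : ℕ} [NeZero q] {S : Finset (ZMod q)}
    (hE : ∀ m ∈ E, (m : ZMod q) ∈ S) (M : ℤ) (N : ℕ) :
    cnt E M N ≤ (N / q + 1) * S.card := by
  classical
  have hcoe : E ∩ Set.Ioc M (M + N) = ↑{m ∈ Finset.Ioc M (M + N) | m ∈ E} := by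
    ext m
    simp only [Set.mem_inter_iff, Set.mem_Ioc, coe_filter, Finset.mem_Ioc, Set.mem_ofPred_eq]
    tauto
  rw [cnt, hcoe, Set.ncard_coe_finset]
  refine card_le_mul_card_image_of_maps_to (fun m hm => hE m (mem_filter.mp hm).2) _ ?_
  intro s _
  refine le_trans (card_le_card ?_) (card_filter_Ioc_intCast_eq_le M N s)
  intro m
  simp only [mem_filter]
  tauto

end IntegerCounting

theorem upperBanachDensity_le_of_cnt_le {E : Set ℤ} {a b : ℝ≥0∞} (hb : b ≠ ∞)
    (h : ∀ M N, (cnt E M N : ℝ≥0∞) ≤ a * N + b) : upperBanachDensity E ≤ a := by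
  have hbound : ∀ᶠ N : ℕ in atTop, (⨆ M : ℤ, (cnt E M N : ℝ≥0∞) / (N : ℝ≥0∞) ^ (1 : ℝ))
      ≤ a + b / N := by
    filter_upwards [eventually_ge_atTop 1] with N hN
    have hN0 : (N : ℝ≥0∞) ≠ 0 := by exact_mod_cast (Nat.one_le_iff_ne_zero.mp hN)
    refine iSup_le fun M => ?_
    calc (cnt E M N : ℝ≥0∞) / (N : ℝ≥0∞) ^ (1 : ℝ) ≤ (a * N + b) / N := by
          rw [ENNReal.rpow_one]; gcongr; exact h M N
      _ = a + b / N := by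
          rw [ENNReal.add_div, ENNReal.mul_div_cancel_right hN0 (ENNReal.natCast_ne_top N)]
  have hlim : Tendsto (fun N : ℕ => a + b / N) atTop (𝓝 a) := by
    simpa using tendsto_const_nhds.add
      (ENNReal.Tendsto.const_div ENNReal.tendsto_nat_nhds_top (Or.inr hb))
  exact (limsup_le_limsup hbound).trans_eq hlim.limsup_eq

theorem upperBanachDensity_le_of_forall_intCast_mem {E : Set ℤ} {q : ℕ} [NeZero q]
    {S : Finset (ZMod q)} (hE : ∀ m ∈ E, (m : ZMod q) ∈ S) :
    upperBanachDensity E ≤ S.card / q := by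
  refine upperBanachDensity_le_of_cnt_le (b := S.card) (ENNReal.natCast_ne_top _) fun M N => ?_
  have hq : (q : ℝ≥0∞) ≠ 0 := by exact_mod_cast NeZero.ne q
  have hdiv : ((N / q : ℕ) : ℝ≥0∞) ≤ N / q := by
    rw [ENNReal.le_div_iff_mul_le (Or.inl hq) (Or.inl (ENNReal.natCast_ne_top q))]
    exact_mod_cast Nat.div_mul_le_self N q
  calc (cnt E M N : ℝ≥0∞) ≤ ((N / q + 1) * S.card : ℕ) := by
        exact_mod_cast cnt_le_of_forall_intCast_mem hE M N
    _ ≤ (N / q + 1) * S.card := by push_cast; gcongr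
    _ = S.card / q * N + S.card := by
        simp only [add_mul, one_mul, div_eq_mul_inv]
        ring

theorem measure_preimage_eq_card_div {X G : Type*} [AddGroup X] [MeasurableSpace X]
    [MeasurableAdd X] [AddGroup G] [Fintype G] (μ : Measure X) [IsProbabilityMeasure μ]
    [μ.IsAddLeftInvariant] {f : X →+ G} (hf : Function.Surjective f)
    (hfib : ∀ g, MeasurableSet (f ⁻¹' {g})) (S : Finset G) :
    μ (f ⁻¹' S) = S.card / Fintype.card G := by
  classical
  have hfib_eq : ∀ g, μ (f ⁻¹' {g}) = μ (f ⁻¹' {0}) := by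
    intro g
    obtain ⟨x, rfl⟩ := hf g
    rw [← measure_preimage_add μ x]
    congr 1
    ext y
    simp
  have hsum : ∀ T : Finset G, μ (f ⁻¹' T) = T.card * μ (f ⁻¹' {0}) := by
    intro T
    rw [← sum_measure_preimage_singleton T fun g _ => hfib g, Finset.sum_congr rfl
      fun g _ => hfib_eq g, Finset.sum_const, nsmul_eq_mul]
  have hzero : μ (f ⁻¹' {0}) = (Fintype.card G : ℝ≥0∞)⁻¹ := by
    refine ENNReal.eq_inv_of_mul_eq_one_left ?_
    rw [mul_comm, ← Finset.card_univ, ← hsum, Finset.coe_univ, Set.preimage_univ, measure_univ]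
  rw [hsum, hzero, div_eq_mul_inv]

theorem tendsto_zpow_neg_natCast_nhds_zero {r : ℝ} (hr : 1 < r) :
    Tendsto (fun n : ℕ => r ^ (-(n : ℤ))) atTop (𝓝 0) := by
  simpa [zpow_neg, zpow_natCast, inv_pow] using
    tendsto_pow_atTop_nhds_zero_of_lt_one (inv_nonneg.mpr (by positivity)) (inv_lt_one_of_one_lt₀ hr)

namespace PadicInt

variable {p : ℕ} [Fact p.Prime]

theorem toZModPow_eq_iff_dist_le {n : ℕ} {x y : ℤ_[p]} :
    toZModPow n x = toZModPow n y ↔ dist x y ≤ (p : ℝ) ^ (-(n : ℤ)) := by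
  rw [dist_eq_norm, norm_le_pow_iff_mem_span_pow, ← ker_toZModPow, RingHom.mem_ker, map_sub,
    sub_eq_zero]

theorem preimage_toZModPow_singleton (n : ℕ) (x : ℤ_[p]) :
    toZModPow n ⁻¹' {toZModPow n x} = closedBall x ((p : ℝ) ^ (-(n : ℤ))) := by
  ext y
  exact toZModPow_eq_iff_dist_le

theorem measure_preimage_toZModPow (μ : Measure ℤ_[p]) [IsProbabilityMeasure μ]
    [μ.IsAddLeftInvariant] (n : ℕ) (S : Finset (ZMod (p ^ n))) :
    μ (toZModPow n ⁻¹' S) = S.card / (p ^ n : ℕ) := by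
  have hsurj := ZMod.ringHom_surjective (toZModPow (p := p) n)
  have hfib : ∀ g, MeasurableSet (toZModPow n ⁻¹' {g}) := fun g => by
    obtain ⟨x, rfl⟩ := hsurj g
    exact (preimage_toZModPow_singleton n x).symm ▸ measurableSet_closedBall
  simpa using measure_preimage_eq_card_div μ (f := (toZModPow n).toAddMonoidHom) hsurj hfib S

theorem preimage_image_toZModPow_subset_cthickening (n : ℕ) (F : Set ℤ_[p]) :
    toZModPow n ⁻¹' (toZModPow n '' F) ⊆ cthickening ((p : ℝ) ^ (-(n : ℤ))) F := by
  rintro x ⟨y, hyF, hxy⟩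
  exact mem_cthickening_of_dist_le x y _ F hyF (toZModPow_eq_iff_dist_le.mp hxy.symm)

end PadicInt

/-- If `F ⊆ ℤ_p` is closed, then `d*(F ∩ ℤ) ≤ μ_p(F)` where `μ_p` is the
Haar probability measure on `ℤ_p`. -/
theorem banachDensity_le_haar (F : Set ℤ_[p]) (hF : IsClosed F)
    (μ : Measure ℤ_[p]) [μ.IsAddHaarMeasure] [IsProbabilityMeasure μ] :
    upperBanachDensity (proj p F) ≤ μ F := by
  classical
  have hbound : ∀ n : ℕ,
      upperBanachDensity (proj p F) ≤ μ (cthickening ((p : ℝ) ^ (-(n : ℤ))) F) := fun n => by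
    set S := (PadicInt.toZModPow n '' F).toFinite.toFinset
    have hproj : ∀ m ∈ proj p F, (m : ZMod (p ^ n)) ∈ S := fun m hm => by
      simpa [S] using ⟨m, hm, map_intCast _ _⟩
    calc upperBanachDensity (proj p F) ≤ S.card / (p ^ n : ℕ) :=
          upperBanachDensity_le_of_forall_intCast_mem hproj
      _ = μ (PadicInt.toZModPow n ⁻¹' S) := (PadicInt.measure_preimage_toZModPow μ n S).symm
      _ ≤ μ (cthickening ((p : ℝ) ^ (-(n : ℤ))) F) := by
          gcongr
          simpa [S] using PadicInt.preimage_image_toZModPow_subset_cthickening n F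
  have hlim : Tendsto (fun n : ℕ => μ (cthickening ((p : ℝ) ^ (-(n : ℤ))) F)) atTop (𝓝 (μ F)) :=
    (tendsto_measure_cthickening_of_isClosed ⟨1, one_pos, measure_ne_top μ _⟩ hF).comp
      (tendsto_zpow_neg_natCast_nhds_zero (by exact_mod_cast (Fact.out : p.Prime).one_lt))
  exact ge_of_tendsto' hlim hbound

end
end

section
/- Let p be a prime, 0 < s, and let F ⊆ ℤ_p be a closed set. Suppose there is a constant C > 0 such that limsup_{|I|→∞} |F ∩ B ∩ I|/|B ∩ I|^s ≤ C for every closed ball B ⊆ ℤ_p (the limsup taken over intervals of integers I with |I|→∞). Then ℋ_s(F ∩ ℤ) ≤ C · ℋ^s(F), where ℋ_s is the s-counting measure on ℤ and ℋ^s is the s-dimensional Hausdorff measure on ℤ_p. -/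
/-! Given `ε > 0`, cover `F` by countably many sets whose `s`-th powers of diameters sum to at
most `ℋ^s(F) + ε`. In `ℤ_p` every such set lies in a ball `B_{p^{-k}}` with `p^{-k}` at most its
diameter (plus slack when that is `0`), and as `F` is compact finitely many of these balls cover
it. The integers in `B_{p^{-k}}` form a residue class mod `p^k`, of density `p^{-k}` in long
intervals, so the hypothesis gives `ℋ_s(F ∩ B ∩ ℤ) ≤ C p^{-ks}`; finite subadditivity of `ℋ_s`
then yields `ℋ_s(F ∩ ℤ) ≤ C (ℋ^s(F) + ε)`. -/

open MeasureTheory Filter Set Metric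
open scoped ENNReal NNReal

noncomputable section

variable (p : ℕ) [Fact p.Prime]

open scoped Topology

lemma cnt_mono {E E' : Set ℤ} (h : E ⊆ E') (M : ℤ) (n : ℕ) : cnt E M n ≤ cnt E' M n :=
  Set.ncard_le_ncard (Set.inter_subset_inter_left _ h) ((Set.finite_Ioc _ _).inter_of_right _)

lemma cnt_biUnion_le {ι : Type*} (t : Finset ι) (E : ι → Set ℤ) (M : ℤ) (n : ℕ) :
    cnt (⋃ i ∈ t, E i) M n ≤ ∑ i ∈ t, cnt (E i) M n := by
  simp only [cnt, Set.iUnion₂_inter]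
  exact t.set_ncard_biUnion_le _

lemma cnt_setOf_dvd_sub_mul_le (q : ℕ) (hq : 0 < q) (a M : ℤ) (n : ℕ) :
    cnt {z : ℤ | (q : ℤ) ∣ z - a} M n * q ≤ n + q := by
  have hq' : (0 : ℚ) < q := by exact_mod_cast hq
  suffices h : (cnt {z : ℤ | (q : ℤ) ∣ z - a} M n : ℚ) ≤ n / q + 1 by
    rw [div_add_one hq'.ne', le_div_iff₀ hq'] at h
    exact_mod_cast h
  have hset : {z : ℤ | (q : ℤ) ∣ z - a} ∩ Set.Ioc M (M + n) =
      ↑({z ∈ Finset.Ioc M (M + n) | z ≡ a [ZMOD q]}) := by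
    ext z
    simp [Int.modEq_iff_dvd, dvd_sub_comm, and_comm]
  have hupper := Int.floor_le (((M + n - a : ℤ) : ℚ) / q)
  have hlower := Int.lt_floor_add_one (((M - a : ℤ) : ℚ) / q)
  rw [cnt, hset, Set.ncard_coe_finset, ← Int.cast_natCast,
    Int.Ioc_filter_modEq_card _ _ (by exact_mod_cast hq)]
  push_cast at hupper hlower ⊢
  have hsplit : ((M : ℚ) + n - a) / q = (M - a) / q + n / q := by ring
  exact max_le (by linarith) (by positivity)

namespace ENNReal

variable {α : Type*} {l : Filter α}

lemma limsup_add_le' (u v : α → ℝ≥0∞) : l.limsup (u + v) ≤ l.limsup u + l.limsup v := by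
  refine ENNReal.le_of_forall_pos_le_add fun ε hε hlt => ?_
  have hclose : ∀ w : α → ℝ≥0∞, l.limsup w < ∞ → ∀ᶠ x in l, w x < l.limsup w + (ε / 2 : ℝ≥0) :=
    fun w hw => eventually_lt_of_limsup_lt
      (ENNReal.lt_add_right hw.ne (by simpa using (half_pos hε).ne'))
  obtain ⟨hu, hv⟩ := ENNReal.add_lt_top.1 hlt
  refine limsup_le_of_le (by isBoundedDefault) ?_
  filter_upwards [hclose u hu, hclose v hv] with x hux hvx
  calc u x + v x ≤ (l.limsup u + (ε / 2 : ℝ≥0)) + (l.limsup v + (ε / 2 : ℝ≥0)) :=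
        add_le_add hux.le hvx.le
    _ = l.limsup u + l.limsup v + ε := by
        rw [add_add_add_comm, ← ENNReal.coe_add, add_halves]

lemma limsup_finset_sum_le {ι : Type*} (t : Finset ι) (f : ι → α → ℝ≥0∞) :
    l.limsup (fun x => ∑ i ∈ t, f i x) ≤ ∑ i ∈ t, l.limsup (f i) := by
  classical
  induction t using Finset.induction_on with
  | empty => simpa using (limsup_const_bot (α := ℝ≥0∞) (f := l)).le
  | insert i t hi ih =>
    simp only [Finset.sum_insert hi]
    exact (limsup_add_le' (f i) fun x => ∑ j ∈ t, f j x).trans (by gcongr)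

lemma div_rpow_le_div_rpow_mul_rpow {x b c : ℝ≥0∞} {s : ℝ} (hs : 0 ≤ s) (hxb : x ≤ b)
    (hb : b ≠ ∞) : x / c ^ s ≤ x / b ^ s * (b / c) ^ s := by
  rcases eq_or_ne b 0 with rfl | hb₀
  · simp [nonpos_iff_eq_zero.1 hxb]
  have hbs₀ : b ^ s ≠ 0 := (ENNReal.rpow_pos (pos_iff_ne_zero.2 hb₀) hb).ne'
  have hbs : b ^ s ≠ ∞ := ENNReal.rpow_ne_top_of_nonneg hs hb
  rw [ENNReal.div_rpow_of_nonneg _ _ hs, div_eq_mul_inv, div_eq_mul_inv, div_eq_mul_inv,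
    mul_assoc, ← mul_assoc (b ^ s)⁻¹, ENNReal.inv_mul_cancel hbs₀ hbs, one_mul]

end ENNReal

lemma countingMeasure_mono (s : ℝ) {E E' : Set ℤ} (h : E ⊆ E') :
    countingMeasure s E ≤ countingMeasure s E' :=
  limsup_le_limsup (Eventually.of_forall fun n => iSup_mono fun M => by
    gcongr; exact cnt_mono h M n)

lemma countingMeasure_biUnion_le (s : ℝ) {ι : Type*} (t : Finset ι) (E : ι → Set ℤ) :
    countingMeasure s (⋃ i ∈ t, E i) ≤ ∑ i ∈ t, countingMeasure s (E i) := by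
  refine (limsup_le_limsup (Eventually.of_forall fun n => iSup_le fun M => ?_)).trans
    (ENNReal.limsup_finset_sum_le t _)
  calc (cnt (⋃ i ∈ t, E i) M n : ℝ≥0∞) / (n : ℝ≥0∞) ^ s
      ≤ (∑ i ∈ t, (cnt (E i) M n : ℝ≥0∞)) / (n : ℝ≥0∞) ^ s := by
        gcongr; exact_mod_cast cnt_biUnion_le t E M n
    _ = ∑ i ∈ t, (cnt (E i) M n : ℝ≥0∞) / (n : ℝ≥0∞) ^ s := by
        simp only [div_eq_mul_inv, Finset.sum_mul]
    _ ≤ ∑ i ∈ t, ⨆ M, (cnt (E i) M n : ℝ≥0∞) / (n : ℝ≥0∞) ^ s :=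
        Finset.sum_le_sum fun i _ => le_iSup (fun M => (cnt (E i) M n : ℝ≥0∞) / _) M

lemma countingMeasure_inter_le_relCount_mul {s : ℝ} (hs : 0 ≤ s) (A B : Set ℤ) {r : ℝ≥0∞}
    (hr₀ : r ≠ 0) (hr : r ≠ ∞) (hB : ∀ M n, (cnt B M n : ℝ≥0∞) ≤ r * n + 1) :
    countingMeasure s (A ∩ B) ≤ relCount s A B * r ^ s := by
  have hdensity : ∀ M n, (cnt B M n : ℝ≥0∞) / n ≤ r + (n : ℝ≥0∞)⁻¹ := fun M n =>
    calc (cnt B M n : ℝ≥0∞) / n ≤ (r * n + 1) / n := by gcongr; exact hB M n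
      _ = r * n / n + (n : ℝ≥0∞)⁻¹ := by rw [ENNReal.add_div, one_div]
      _ ≤ r + (n : ℝ≥0∞)⁻¹ := by gcongr; exact ENNReal.div_le_of_le_mul le_rfl
  have hpointwise : ∀ n : ℕ, ⨆ M, (cnt (A ∩ B) M n : ℝ≥0∞) / (n : ℝ≥0∞) ^ s ≤
      (⨆ M, (cnt (A ∩ B) M n : ℝ≥0∞) / (cnt B M n : ℝ≥0∞) ^ s) * (r + (n : ℝ≥0∞)⁻¹) ^ s :=
    fun n => iSup_le fun M =>
      calc (cnt (A ∩ B) M n : ℝ≥0∞) / (n : ℝ≥0∞) ^ s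
          ≤ (cnt (A ∩ B) M n : ℝ≥0∞) / (cnt B M n : ℝ≥0∞) ^ s * ((cnt B M n : ℝ≥0∞) / n) ^ s :=
            ENNReal.div_rpow_le_div_rpow_mul_rpow hs
              (by exact_mod_cast cnt_mono Set.inter_subset_right M n) (ENNReal.natCast_ne_top _)
        _ ≤ _ := by
            gcongr
            · exact le_iSup (fun M => (cnt (A ∩ B) M n : ℝ≥0∞) / (cnt B M n : ℝ≥0∞) ^ s) M
            · exact hdensity M n
  have hlim : Tendsto (fun n : ℕ => (r + (n : ℝ≥0∞)⁻¹) ^ s) atTop (𝓝 (r ^ s)) := by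
    simpa [Function.comp_def] using (ENNReal.continuous_rpow_const.tendsto _).comp
      (tendsto_const_nhds.add ENNReal.tendsto_inv_nat_nhds_zero)
  have hrs₀ : r ^ s ≠ 0 := (ENNReal.rpow_pos (pos_iff_ne_zero.2 hr₀) hr).ne'
  have hrs : r ^ s ≠ ∞ := ENNReal.rpow_ne_top_of_nonneg hs hr
  calc countingMeasure s (A ∩ B)
      ≤ atTop.limsup ((fun n : ℕ => ⨆ M, (cnt (A ∩ B) M n : ℝ≥0∞) / (cnt B M n : ℝ≥0∞) ^ s) *
          fun n : ℕ => (r + (n : ℝ≥0∞)⁻¹) ^ s) :=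
        limsup_le_limsup (Eventually.of_forall hpointwise)
    _ ≤ relCount s A B * r ^ s := by
        rw [← hlim.limsup_eq]
        exact ENNReal.limsup_mul_le' (.inr (by rwa [hlim.limsup_eq]))
          (.inr (by rwa [hlim.limsup_eq]))

lemma proj_pball_eq_setOf_dvd {x : ℤ_[p]} {k : ℕ} {a : ℤ} (ha : a ∈ proj p (pball p x k)) :
    proj p (pball p x k) = {z : ℤ | (p : ℤ) ^ k ∣ z - a} := by
  ext z
  change (z : ℤ_[p]) ∈ pball p x k ↔ _
  rw [pball, IsUltrametricDist.closedBall_eq_of_mem ha, Metric.mem_closedBall, dist_eq_norm,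
    ← Int.cast_sub, PadicInt.norm_int_le_pow_iff_dvd]
  rfl

lemma cnt_proj_pball_le (x : ℤ_[p]) (k : ℕ) (M : ℤ) (n : ℕ) :
    (cnt (proj p (pball p x k)) M n : ℝ≥0∞) ≤ ((p : ℝ≥0∞) ^ k)⁻¹ * n + 1 := by
  rcases (proj p (pball p x k)).eq_empty_or_nonempty with hempty | ⟨a, ha⟩
  · simp [hempty, cnt]
  have hq₀ : (p : ℝ≥0∞) ^ k ≠ 0 := pow_ne_zero _ (by exact_mod_cast (Fact.out : p.Prime).ne_zero)
  have hq : (p : ℝ≥0∞) ^ k ≠ ∞ := ENNReal.pow_ne_top (ENNReal.natCast_ne_top p)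
  have hcount := cnt_setOf_dvd_sub_mul_le (p ^ k) (pow_pos (Fact.out : p.Prime).pos k) a M n
  push_cast at hcount
  rw [proj_pball_eq_setOf_dvd p ha]
  refine (ENNReal.mul_le_mul_iff_left hq₀ hq).1 ?_
  rw [add_mul, mul_right_comm, ENNReal.inv_mul_cancel hq₀ hq, one_mul, one_mul]
  exact_mod_cast hcount

lemma countingMeasure_proj_inter_pball_le {s : ℝ} (hs : 0 ≤ s) (F : Set ℤ_[p]) (x : ℤ_[p])
    (k : ℕ) : countingMeasure s (proj p F ∩ proj p (pball p x k)) ≤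
      etaN p s F x k * (((p : ℝ≥0∞) ^ k)⁻¹) ^ s :=
  countingMeasure_inter_le_relCount_mul hs _ _
    (ENNReal.inv_ne_zero.2 (ENNReal.pow_ne_top (ENNReal.natCast_ne_top p)))
    (ENNReal.inv_ne_top.2 (pow_ne_zero _ (by exact_mod_cast (Fact.out : p.Prime).ne_zero)))
    (cnt_proj_pball_le p x k)

lemma countingMeasure_proj_le_sum_of_cover {s : ℝ} (hs : 0 ≤ s) {F : Set ℤ_[p]} {ι : Type*}
    (t : Finset ι) (x : ι → ℤ_[p]) (k : ι → ℕ) (hcover : F ⊆ ⋃ i ∈ t, pball p (x i) (k i)) :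
    countingMeasure s (proj p F) ≤
      ∑ i ∈ t, etaN p s F (x i) (k i) * (((p : ℝ≥0∞) ^ k i)⁻¹) ^ s := by
  have hproj : proj p F ⊆ ⋃ i ∈ t, proj p F ∩ proj p (pball p (x i) (k i)) := fun z hz => by
    obtain ⟨i, hi, hzi⟩ := Set.mem_iUnion₂.1 (hcover hz)
    exact Set.mem_iUnion₂.2 ⟨i, hi, hz, hzi⟩
  calc countingMeasure s (proj p F)
      ≤ ∑ i ∈ t, countingMeasure s (proj p F ∩ proj p (pball p (x i) (k i))) :=
        (countingMeasure_mono s hproj).trans (countingMeasure_biUnion_le s t _)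
    _ ≤ _ := Finset.sum_le_sum fun i _ => countingMeasure_proj_inter_pball_le p hs F (x i) (k i)

lemma isOpen_pball (x : ℤ_[p]) (k : ℕ) : IsOpen (pball p x k) :=
  IsUltrametricDist.isOpen_closedBall x
    (zpow_pos (by exact_mod_cast (Fact.out : p.Prime).pos) _).ne'

lemma exists_pball_superset {S : Set ℤ_[p]} {r : ℝ≥0∞} (hr : r ≠ 0) (hS : ediam S ≤ r) :
    ∃ x k, S ⊆ pball p x k ∧ ((p : ℝ≥0∞) ^ k)⁻¹ ≤ r := by
  classical
  have hex : ∃ k : ℕ, ((p : ℝ≥0∞) ^ k)⁻¹ ≤ r := by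
    obtain ⟨k, hk⟩ := ENNReal.exists_inv_nat_lt hr
    refine ⟨k, le_trans (ENNReal.inv_le_inv.2 ?_) hk.le⟩
    exact_mod_cast (Nat.lt_pow_self (Fact.out : p.Prime).one_lt).le
  rcases S.eq_empty_or_nonempty with rfl | ⟨y, hy⟩
  · exact ⟨0, Nat.find hex, Set.empty_subset _, Nat.find_spec hex⟩
  refine ⟨y, Nat.find hex, fun z hz => ?_, Nat.find_spec hex⟩
  have hzy : edist z y ≤ r := (Metric.edist_le_ediam_of_mem hz hy).trans hS
  rw [pball, Metric.mem_closedBall, dist_eq_norm]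
  cases hk : Nat.find hex with
  | zero => simpa using PadicInt.norm_le_one (z - y)
  | succ j =>
    -- `‖z - y‖` is a power of `p`, so `‖z - y‖ < p ^ (-j)` forces `‖z - y‖ ≤ p ^ (-(j + 1))`.
    have hj : r < ((p : ℝ≥0∞) ^ j)⁻¹ := not_le.1 (Nat.find_min hex (by omega))
    have hp : (0 : ℝ) < p := by exact_mod_cast (Fact.out : p.Prime).pos
    have hlt : ‖z - y‖ < (p : ℝ) ^ (-(j : ℤ)) := by
      rw [← dist_eq_norm, ← edist_lt_ofReal]
      convert hzy.trans_lt hj using 1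
      rw [zpow_neg, zpow_natCast, ENNReal.ofReal_inv_of_pos (pow_pos hp j),
        ENNReal.ofReal_pow hp.le, ENNReal.ofReal_natCast]
    rw [PadicInt.norm_lt_pow_iff_norm_le_pow_sub_one] at hlt
    convert hlt using 3
    push_cast
    ring

lemma exists_pball_superset_rpow_le {s : ℝ} (hs : 0 < s) (S : Set ℤ_[p]) {δ : ℝ≥0∞}
    (hδ : δ ≠ 0) : ∃ x k, S ⊆ pball p x k ∧
      (((p : ℝ≥0∞) ^ k)⁻¹) ^ s ≤ (⨆ _ : S.Nonempty, ediam S ^ s) + δ := by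
  set w := (⨆ _ : S.Nonempty, ediam S ^ s) + δ
  have hdiam : ediam S ≤ w ^ s⁻¹ := by
    rcases S.eq_empty_or_nonempty with rfl | hne
    · simp
    rw [ENNReal.le_rpow_inv_iff hs]
    exact (le_iSup (fun _ : S.Nonempty => ediam S ^ s) hne).trans le_self_add
  have hw : w ^ s⁻¹ ≠ 0 := by simp [ENNReal.rpow_eq_zero_iff, hs, hs.le, w, hδ]
  obtain ⟨x, k, hS, hk⟩ := exists_pball_superset p hw hdiam
  exact ⟨x, k, hS, (ENNReal.le_rpow_inv_iff hs).1 hk⟩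

lemma exists_pball_cover_tsum_le {s : ℝ} (hs : 0 < s) (F : Set ℤ_[p]) {ε : ℝ≥0∞}
    (hε : ε ≠ 0) : ∃ (x : ℕ → ℤ_[p]) (k : ℕ → ℕ), F ⊆ ⋃ n, pball p (x n) (k n) ∧
      ∑' n, (((p : ℝ≥0∞) ^ k n)⁻¹) ^ s ≤ μH[s] F + ε := by
  rcases eq_or_ne (μH[s] F) ∞ with htop | hfin
  · refine ⟨fun _ => 0, fun _ => 0, fun z _ => Set.mem_iUnion.2 ⟨0, ?_⟩, by simp [htop]⟩
    simpa [pball] using PadicInt.norm_le_one z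
  have hε₂ : ε / 2 ≠ 0 := (ENNReal.half_pos hε).ne'
  obtain ⟨t, hcov, -, ht⟩ : ∃ t : ℕ → Set ℤ_[p], F ⊆ ⋃ n, t n ∧ (∀ n, ediam (t n) ≤ 1) ∧
      ∑' n, ⨆ _ : (t n).Nonempty, ediam (t n) ^ s < μH[s] F + ε / 2 := by
    have hinf : (⨅ (t : ℕ → Set ℤ_[p]) (_ : F ⊆ ⋃ n, t n) (_ : ∀ n, ediam (t n) ≤ 1),
        ∑' n, ⨆ _ : (t n).Nonempty, ediam (t n) ^ s) < μH[s] F + ε / 2 := by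
      refine lt_of_le_of_lt ?_ (ENNReal.lt_add_right hfin hε₂)
      rw [Measure.hausdorffMeasure_apply]
      exact le_iSup₂_of_le 1 one_pos le_rfl
    simpa only [iInf_lt_iff, exists_prop] using hinf
  obtain ⟨δ, hδ, hδsum⟩ := ENNReal.exists_pos_sum_of_countable' hε₂ ℕ
  choose x k hsub hk using fun n => exists_pball_superset_rpow_le p hs (t n) (hδ n).ne'
  refine ⟨x, k, hcov.trans (Set.iUnion_mono hsub), ?_⟩
  calc ∑' n, (((p : ℝ≥0∞) ^ k n)⁻¹) ^ s
      ≤ ∑' n, ((⨆ _ : (t n).Nonempty, ediam (t n) ^ s) + δ n) := ENNReal.tsum_le_tsum hk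
    _ = (∑' n, ⨆ _ : (t n).Nonempty, ediam (t n) ^ s) + ∑' n, δ n := ENNReal.tsum_add
    _ ≤ μH[s] F + ε / 2 + ε / 2 := add_le_add ht.le hδsum.le
    _ = μH[s] F + ε := by rw [add_assoc, ENNReal.add_halves]

theorem countingMeasure_le_const_mul_hausdorff (s : ℝ) (hs : 0 < s)
    (F : Set ℤ_[p]) (hF : IsClosed F) (C : ℝ≥0)
    (hbd : ∀ (x : ℤ_[p]) (n : ℕ), etaN p s F x n ≤ (C : ℝ≥0∞)) :
    countingMeasure s (proj p F) ≤ (C : ℝ≥0∞) * μH[s] F := by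
  have hbound : ∀ ε : ℝ≥0∞, ε ≠ 0 → countingMeasure s (proj p F) ≤ C * (μH[s] F + ε) := by
    intro ε hε
    obtain ⟨x, k, hcov, hsum⟩ := exists_pball_cover_tsum_le p hs F hε
    obtain ⟨u, hu⟩ := hF.isCompact.elim_finite_subcover _ (fun n => isOpen_pball p (x n) (k n)) hcov
    calc countingMeasure s (proj p F)
        ≤ ∑ n ∈ u, etaN p s F (x n) (k n) * (((p : ℝ≥0∞) ^ k n)⁻¹) ^ s :=
          countingMeasure_proj_le_sum_of_cover p hs.le u x k hu
      _ ≤ ∑ n ∈ u, C * (((p : ℝ≥0∞) ^ k n)⁻¹) ^ s := by gcongr; exact hbd _ _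
      _ ≤ C * ∑' n, (((p : ℝ≥0∞) ^ k n)⁻¹) ^ s := by
          rw [← Finset.mul_sum]; gcongr; exact ENNReal.sum_le_tsum u
      _ ≤ C * (μH[s] F + ε) := by gcongr
  have hlim : Tendsto (fun ε => (C : ℝ≥0∞) * (μH[s] F + ε)) (𝓝[>] 0) (𝓝 (C * μH[s] F)) := by
    have := ((ENNReal.continuous_const_mul (a := C) ENNReal.coe_ne_top).comp
      (continuous_const_add (μH[s] F))).tendsto 0
    simpa [Function.comp_def] using this.mono_left nhdsWithin_le_nhds
  exact ge_of_tendsto hlim (eventually_nhdsWithin_of_forall fun ε hε => hbound ε hε.ne')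

end
end

section
/- Let p be a prime, s > 0, and let F ⊆ ℤ_p be a closed set with ℋ^s(F) < ∞. Assume there is an ℋ^s-integrable function g such that η_s(F;x,n) ≤ g(x) for all n and for ℋ^s-almost all x ∈ F. Let θ̲*^s(F) = limsup_{n→∞} min_{a ∈ G_n} ℋ^s(F ∩ B_{p^{-n}}(a)) / p^{-ns}, where G_n is the set of residues a ∈ ℤ/p^nℤ whose ball B_{p^{-n}}(a) meets F. Then θ̲*^s(F) · ℋ_s(F ∩ ℤ) ≤ ∫_F η_s(F;x) dℋ^s(x). -/
open MeasureTheory Filter Set Metric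
open scoped ENNReal NNReal

noncomputable section

variable (p : ℕ) [Fact p.Prime]

/-! Integers in the ball `B_{p^{-n}}(a)` form the residue class of `a` mod `p^n`, which has
density `p^{-n}` in long intervals; splitting `F ∩ ℤ` along these classes therefore gives
`ℋ_s(F ∩ ℤ) ≤ p^{-ns} ∑_a η_s(F;a,n)`. Whenever the ball meets `F`, `p^{-ns}` times the `n`-th
term of `θ̲*^s(F)` is at most `ℋ^s(F ∩ B_{p^{-n}}(a))` (otherwise `η_s(F;a,n) = 0`), and
`η_s(F;·,n)` is constant on each ball, so the product is at most `∫_F η_s(F;x,n) dℋ^s(x)`.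
Passing to the `limsup` in `n`, the reverse Fatou lemma with majorant `g` concludes. -/

open scoped Topology

lemma ENNReal.div_rpow_eq_div_rpow_mul_div_rpow {x y z : ℝ≥0∞} {s : ℝ} (hs : 0 ≤ s)
    (hxy : x ≤ y) (hy : y ≠ ⊤) : x / z ^ s = x / y ^ s * (y / z) ^ s := by
  rcases eq_or_ne y 0 with rfl | hy0
  · simp [nonpos_iff_eq_zero.1 hxy]
  have hys : y ^ s ≠ 0 := by simp [ENNReal.rpow_eq_zero_iff, hy0, hy]
  rw [ENNReal.div_rpow_of_nonneg _ _ hs, ← mul_div_assoc,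
    ENNReal.div_mul_cancel hys (ENNReal.rpow_ne_top_of_nonneg hs hy)]

lemma ENNReal.limsup_add_le_add {α : Type*} {f : Filter α} (u v : α → ℝ≥0∞) :
    f.limsup (u + v) ≤ f.limsup u + f.limsup v := by
  refine ENNReal.le_of_forall_pos_le_add fun ε hε hlt => ?_
  obtain ⟨hu, hv⟩ := ENNReal.add_lt_top.1 hlt
  have hε2 : (ε / 2 : ℝ≥0∞) ≠ 0 := by simp [hε.ne']
  refine Filter.limsup_le_of_le (by isBoundedDefault) ?_
  filter_upwards [eventually_lt_of_limsup_lt (ENNReal.lt_add_right hu.ne hε2),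
    eventually_lt_of_limsup_lt (ENNReal.lt_add_right hv.ne hε2)] with x hux hvx
  calc u x + v x ≤ (f.limsup u + ε / 2) + (f.limsup v + ε / 2) := add_le_add hux.le hvx.le
    _ = f.limsup u + f.limsup v + ε := by rw [add_add_add_comm, ENNReal.add_halves]

lemma ENNReal.limsup_sum_le {α ι : Type*} {f : Filter α} (t : Finset ι) (u : ι → α → ℝ≥0∞) :
    f.limsup (fun x => ∑ i ∈ t, u i x) ≤ ∑ i ∈ t, f.limsup (u i) := by
  classical
  induction t using Finset.induction with
  | empty => exact Filter.limsup_le_of_le (by isBoundedDefault) (.of_forall fun _ => le_rfl)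
  | insert i t hi ih =>
    simp only [Finset.sum_insert hi]
    exact (ENNReal.limsup_add_le_add (u i) fun x => ∑ j ∈ t, u j x).trans (by gcongr)

lemma lintegral_comp_fintype {X ι : Type*} [MeasurableSpace X] [Fintype ι]
    [MeasurableSpace ι] [MeasurableSingletonClass ι] {μ : Measure X} {φ : X → ι}
    (hφ : Measurable φ) (h : ι → ℝ≥0∞) :
    ∫⁻ x, h (φ x) ∂μ = ∑ r, h r * μ (φ ⁻¹' {r}) := by
  rw [← lintegral_map (measurable_of_finite h) hφ, lintegral_fintype]
  simp_rw [Measure.map_apply hφ (measurableSet_singleton _)]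

open Finset in
lemma cnt_eq_card (E : Set ℤ) [DecidablePred (· ∈ E)] (M : ℤ) (N : ℕ) :
    cnt E M N = #{m ∈ Ioc M (M + N) | m ∈ E} := by
  rw [cnt, ← Set.ncard_coe_finset]
  congr 1
  ext
  simp only [Set.mem_inter_iff, Set.mem_Ioc, coe_filter, Finset.mem_Ioc, Set.mem_ofPred]
  tauto

lemma cnt_mono_s5 {A B : Set ℤ} (h : A ⊆ B) (M : ℤ) (N : ℕ) : cnt A M N ≤ cnt B M N :=
  Set.ncard_le_ncard (Set.inter_subset_inter_left _ h)
    ((Set.finite_Ioc _ _).subset Set.inter_subset_right)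

lemma cnt_eq_sum_residue (A : Set ℤ) (q : ℕ) [NeZero q] (M : ℤ) (N : ℕ) :
    cnt A M N = ∑ r : ZMod q, cnt (A ∩ {m : ℤ | (m : ZMod q) = r}) M N := by
  classical
  simp only [cnt_eq_card]
  rw [Finset.card_eq_sum_card_fiberwise (f := fun m : ℤ => (m : ZMod q)) (t := Finset.univ)
    (fun _ _ => Finset.mem_coe.2 (Finset.mem_univ _))]
  simp [Finset.filter_filter]

lemma cnt_residue_mul_le (q : ℕ) [NeZero q] (r : ZMod q) (M : ℤ) (N : ℕ) :
    cnt {m : ℤ | (m : ZMod q) = r} M N * q ≤ N + q := by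
  classical
  have hq : (0 : ℚ) < q := by have := NeZero.pos q; positivity
  have hcard := Int.Ioc_filter_modEq_card M (M + N) (r := q) (by exact_mod_cast hq) (r.val : ℤ)
  rw [Finset.filter_congr (q := (· ∈ {m : ℤ | (m : ZMod q) = r})) fun m _ => by
    rw [← ZMod.intCast_eq_intCast_iff]; simp, ← cnt_eq_card] at hcard
  push_cast at hcard
  set a : ℚ := (M + N - r.val) / q
  set b : ℚ := (M - r.val) / q
  have hab : (a - b) * q = N := by
    simp only [a, b]; field_simp; ring
  have h1 := Int.floor_le a
  have h2 := Int.lt_floor_add_one b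
  zify
  rw [hcard]
  rcases le_total (⌊a⌋ - ⌊b⌋) 0 with h | h
  · rw [max_eq_right h, zero_mul]; positivity
  · rw [max_eq_left h]
    have : ((⌊a⌋ - ⌊b⌋ : ℤ) : ℚ) * q < N + q := by
      push_cast; nlinarith
    exact_mod_cast this.le

lemma cnt_residue_div_le (q : ℕ) [NeZero q] (r : ZMod q) (M : ℤ) (N : ℕ) :
    (cnt {m : ℤ | (m : ZMod q) = r} M N : ℝ≥0∞) / N ≤ (q : ℝ≥0∞)⁻¹ + (N : ℝ≥0∞)⁻¹ := by
  rcases Nat.eq_zero_or_pos N with rfl | hN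
  · simp [cnt]
  have hq : (q : ℝ≥0∞) ≠ 0 := by simp [NeZero.ne q]
  have hN : (N : ℝ≥0∞) ≠ 0 := by simp [hN.ne']
  apply ENNReal.div_le_of_le_mul
  rw [add_mul, ENNReal.inv_mul_cancel hN (ENNReal.natCast_ne_top N), ← ENNReal.div_eq_inv_mul,
    ← ENNReal.div_self hq (ENNReal.natCast_ne_top q), ← ENNReal.add_div,
    ENNReal.le_div_iff_mul_le (Or.inl hq) (Or.inl (ENNReal.natCast_ne_top q))]
  exact_mod_cast cnt_residue_mul_le q r M N

lemma relCount_eq_zero_of_disjoint (s : ℝ) {A B : Set ℤ} (h : Disjoint A B) :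
    relCount s A B = 0 := by
  simp [relCount, h.inter_eq, cnt]

theorem countingMeasure_le_rpow_mul_sum_relCount (s : ℝ) (hs : 0 ≤ s) (A : Set ℤ) (q : ℕ)
    [NeZero q] : countingMeasure s A ≤
      (q : ℝ≥0∞)⁻¹ ^ s * ∑ r : ZMod q, relCount s A {m : ℤ | (m : ZMod q) = r} := by
  set B : ZMod q → Set ℤ := fun r => {m : ℤ | (m : ZMod q) = r}
  set S : ZMod q → ℕ → ℝ≥0∞ := fun r N =>
    ⨆ M : ℤ, (cnt (A ∩ B r) M N : ℝ≥0∞) / (cnt (B r) M N : ℝ≥0∞) ^ s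
  set b : ℕ → ℝ≥0∞ := fun N => ((q : ℝ≥0∞)⁻¹ + (N : ℝ≥0∞)⁻¹) ^ s
  have hstep (N : ℕ) :
      ⨆ M : ℤ, (cnt A M N : ℝ≥0∞) / (N : ℝ≥0∞) ^ s ≤ b N * ∑ r, S r N := by
    refine iSup_le fun M => ?_
    rw [cnt_eq_sum_residue A q M N, Nat.cast_sum, ENNReal.div_eq_inv_mul, Finset.mul_sum,
      Finset.mul_sum]
    refine Finset.sum_le_sum fun r _ => ?_
    rw [← ENNReal.div_eq_inv_mul, ENNReal.div_rpow_eq_div_rpow_mul_div_rpow hs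
      (Nat.cast_le.2 (cnt_mono_s5 Set.inter_subset_right M N)) (ENNReal.natCast_ne_top _), mul_comm]
    gcongr
    · exact ENNReal.rpow_le_rpow (cnt_residue_div_le q r M N) hs
    · exact le_iSup (fun M => (cnt (A ∩ B r) M N : ℝ≥0∞) / (cnt (B r) M N : ℝ≥0∞) ^ s) M
  have hb : Tendsto b atTop (𝓝 ((q : ℝ≥0∞)⁻¹ ^ s)) := by
    have h := (tendsto_const_nhds (x := (q : ℝ≥0∞)⁻¹)).add ENNReal.tendsto_inv_nat_nhds_zero
    rw [add_zero] at h
    exact (ENNReal.continuous_rpow_const.tendsto _).comp h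
  have hq : (q : ℝ≥0∞)⁻¹ ≠ 0 := ENNReal.inv_ne_zero.2 (ENNReal.natCast_ne_top q)
  have hq' : (q : ℝ≥0∞)⁻¹ ≠ ⊤ := ENNReal.inv_ne_top.2 (by simp [NeZero.ne q])
  calc countingMeasure s A ≤ atTop.limsup (b * fun N => ∑ r, S r N) :=
        limsup_le_limsup (.of_forall hstep)
    _ ≤ atTop.limsup b * atTop.limsup (fun N => ∑ r, S r N) := by
        refine ENNReal.limsup_mul_le' ?_ ?_ <;> rw [hb.limsup_eq]
        · exact .inl (by simp [ENNReal.rpow_eq_zero_iff, hq, hq'])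
        · exact .inl (ENNReal.rpow_ne_top_of_nonneg hs hq')
    _ ≤ (q : ℝ≥0∞)⁻¹ ^ s * ∑ r, relCount s A (B r) := by
        rw [hb.limsup_eq]
        gcongr
        exact ENNReal.limsup_sum_le _ _

lemma mem_pball_iff_toZModPow {x y : ℤ_[p]} {n : ℕ} :
    y ∈ pball p x n ↔ PadicInt.toZModPow n y = PadicInt.toZModPow n x := by
  rw [pball, Metric.mem_closedBall, dist_eq_norm, PadicInt.norm_le_pow_iff_mem_span_pow,
    ← PadicInt.ker_toZModPow, RingHom.mem_ker, map_sub, sub_eq_zero]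

lemma toZModPow_preimage_singleton (n : ℕ) (r : ZMod (p ^ n)) :
    PadicInt.toZModPow n ⁻¹' {r} = pball p ((r.val : ℤ) : ℤ_[p]) n := by
  ext y
  rw [mem_pball_iff_toZModPow, map_intCast, Int.cast_natCast, ZMod.natCast_zmod_val]
  rfl

lemma measurable_toZModPow (n : ℕ) : Measurable (PadicInt.toZModPow (p := p) n) :=
  measurable_to_countable' fun r => by
    rw [toZModPow_preimage_singleton]
    exact measurableSet_closedBall

lemma proj_pball (x : ℤ_[p]) (n : ℕ) :
    proj p (pball p x n) = {m : ℤ | (m : ZMod (p ^ n)) = PadicInt.toZModPow n x} := by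
  ext m
  exact (mem_pball_iff_toZModPow p).trans (by rw [map_intCast]; rfl)

lemma etaN_eq_relCount_residue (s : ℝ) (F : Set ℤ_[p]) (x : ℤ_[p]) (n : ℕ) :
    etaN p s F x n =
      relCount s (proj p F) {m : ℤ | (m : ZMod (p ^ n)) = PadicInt.toZModPow n x} := by
  rw [etaN, proj_pball]

lemma measurable_etaN (s : ℝ) (F : Set ℤ_[p]) (n : ℕ) :
    Measurable fun x => etaN p s F x n := by
  simp_rw [etaN_eq_relCount_residue]
  exact (measurable_of_finite fun r : ZMod (p ^ n) =>
    relCount s (proj p F) {m : ℤ | (m : ZMod (p ^ n)) = r}).comp (measurable_toZModPow p n)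

def minBallDensity (s : ℝ) (F : Set ℤ_[p]) (n : ℕ) : ℝ≥0∞ :=
  ⨅ (a : ℤ) (_ : (pball p (a : ℤ_[p]) n ∩ F).Nonempty),
    μH[s] (F ∩ pball p (a : ℤ_[p]) n) / (p : ℝ≥0∞) ^ (-((n : ℝ) * s))

lemma thetaStar_eq_limsup_minBallDensity (s : ℝ) (F : Set ℤ_[p]) :
    thetaStar p s F = atTop.limsup (minBallDensity p s F) := rfl

lemma minBallDensity_mul_le (s : ℝ) (F : Set ℤ_[p]) (n : ℕ) {a : ℤ}
    (ha : (pball p (a : ℤ_[p]) n ∩ F).Nonempty) :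
    minBallDensity p s F n * (p : ℝ≥0∞) ^ (-((n : ℝ) * s)) ≤ μH[s] (F ∩ pball p (a : ℤ_[p]) n) :=
  ENNReal.mul_le_of_le_div (iInf₂_le a ha)

theorem minBallDensity_mul_countingMeasure_le_lintegral_etaN (s : ℝ) (hs : 0 ≤ s)
    (F : Set ℤ_[p]) (n : ℕ) :
    minBallDensity p s F n * countingMeasure s (proj p F) ≤ ∫⁻ x in F, etaN p s F x n ∂μH[s] := by
  set φ := PadicInt.toZModPow (p := p) n
  set h : ZMod (p ^ n) → ℝ≥0∞ := fun r => relCount s (proj p F) {m : ℤ | (m : ZMod (p ^ n)) = r}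
  set c : ℝ≥0∞ := (p : ℝ≥0∞) ^ (-((n : ℝ) * s))
  have hc : ((p ^ n : ℕ) : ℝ≥0∞)⁻¹ ^ s = c := by
    rw [Nat.cast_pow, ← ENNReal.rpow_natCast, ← ENNReal.rpow_neg, ← ENNReal.rpow_mul, neg_mul]
  have hterm (r : ZMod (p ^ n)) :
      minBallDensity p s F n * c * h r ≤ h r * μH[s] (φ ⁻¹' {r} ∩ F) := by
    rw [toZModPow_preimage_singleton, mul_comm (h r), Set.inter_comm]
    by_cases hne : (pball p ((r.val : ℤ) : ℤ_[p]) n ∩ F).Nonempty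
    · gcongr
      exact minBallDensity_mul_le p s F n hne
    · have hdisj : Disjoint (proj p F) {m : ℤ | (m : ZMod (p ^ n)) = r} :=
        Set.disjoint_left.2 fun m hmF hmr => hne ⟨m, by
          rw [← toZModPow_preimage_singleton, Set.mem_preimage, map_intCast]; exact hmr, hmF⟩
      simp [h, relCount_eq_zero_of_disjoint s hdisj]
  calc minBallDensity p s F n * countingMeasure s (proj p F)
      ≤ minBallDensity p s F n * (c * ∑ r, h r) := by
        rw [← hc]
        gcongr
        exact countingMeasure_le_rpow_mul_sum_relCount s hs _ (p ^ n)
    _ = ∑ r, minBallDensity p s F n * c * h r := by rw [← mul_assoc, Finset.mul_sum]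
    _ ≤ ∑ r, h r * (μH[s].restrict F) (φ ⁻¹' {r}) := Finset.sum_le_sum fun r _ => by
        rw [Measure.restrict_apply (measurable_toZModPow p n (measurableSet_singleton r))]
        exact hterm r
    _ = ∫⁻ x in F, etaN p s F x n ∂μH[s] := by
        simp_rw [etaN_eq_relCount_residue]
        exact (lintegral_comp_fintype (measurable_toZModPow p n) h).symm

theorem thetaStar_mul_countingMeasure_le_integral_eta (s : ℝ) (hs : 0 < s)
    (F : Set ℤ_[p]) (g : ℤ_[p] → ℝ≥0∞)
    (hgint : ∫⁻ x in F, g x ∂μH[s] ≠ ⊤)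
    (hbound : ∀ᵐ x ∂((μH[s] : Measure ℤ_[p]).restrict F), ∀ n : ℕ, etaN p s F x n ≤ g x) :
    thetaStar p s F * countingMeasure s (proj p F) ≤ ∫⁻ x in F, eta p s F x ∂μH[s] := by
  calc thetaStar p s F * countingMeasure s (proj p F)
      ≤ atTop.limsup fun n => minBallDensity p s F n * countingMeasure s (proj p F) := by
        simpa [thetaStar_eq_limsup_minBallDensity, Pi.mul_def] using
          ENNReal.le_limsup_mul (f := atTop) (u := minBallDensity p s F)
            (v := fun _ => countingMeasure s (proj p F))
    _ ≤ atTop.limsup fun n => ∫⁻ x in F, etaN p s F x n ∂μH[s] :=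
        limsup_le_limsup (.of_forall fun n =>
          minBallDensity_mul_countingMeasure_le_lintegral_etaN p s hs.le F n)
    _ ≤ ∫⁻ x in F, eta p s F x ∂μH[s] :=
        limsup_lintegral_le g (measurable_etaN p s F) (fun n => hbound.mono fun _ hx => hx n) hgint

end
end

section
/- Let p be a prime, s > 0, and F ⊆ ℤ_p. If there exists a point x ∈ ℤ_p with η_s(F;x) > 0, then there exists an unbounded sequence {n_j} of natural numbers such that F ∩ ℤ is s-abundant in the family of finite arithmetic progressions with common differences of the form p^{n_j}; i.e., there exist c > 0 and a sequence of finite arithmetic progressions A_k ⊆ ℤ, each with common difference equal to some p^{n_j}, with |A_{k+1}| > |A_k| and |(F ∩ ℤ) ∩ A_k| ≥ c·|A_k|^s for all k. -/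
open MeasureTheory Filter Set Metric
open scoped ENNReal NNReal

noncomputable section

variable (p : ℕ) [Fact p.Prime]

/-! ### Auxiliary lemmas -/

/-- A residue class intersected with an integer interval is an explicit arithmetic
progression. -/
lemma aux_resClass_eq (r d M N : ℤ) (hd : 0 < d) :
    {z : ℤ | d ∣ z - r} ∩ Set.Ioc M N =
      (fun i : ℕ => (r + d * ((M - r) / d + 1)) + d * (i : ℤ)) ''
        {i : ℕ | i < ((N - r) / d - (M - r) / d).toNat} := by
  ext z
  simp only [Set.mem_inter_iff, Set.mem_setOf_eq, Set.mem_Ioc, Set.mem_image]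
  constructor
  · rintro ⟨⟨t, ht⟩, hM, hN⟩
    have h1 : (M - r) / d < t := by
      rw [Int.ediv_lt_iff_lt_mul hd]
      have hcm : t * d = d * t := mul_comm t d
      linarith
    have h2 : t ≤ (N - r) / d := by
      rw [Int.le_ediv_iff_mul_le hd]
      have hcm : t * d = d * t := mul_comm t d
      linarith
    refine ⟨(t - ((M - r) / d + 1)).toNat, by omega, ?_⟩
    have hnn : ((t - ((M - r) / d + 1)).toNat : ℤ) = t - ((M - r) / d + 1) := by omega
    rw [hnn]
    linear_combination -ht
  · rintro ⟨i, hi, rfl⟩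
    refine ⟨⟨(M - r) / d + 1 + (i : ℤ), by ring⟩, ?_, ?_⟩
    · have h6 : M - r < ((M - r) / d + 1) * d := Int.lt_ediv_add_one_mul_self (M - r) hd
      have h7 : 0 ≤ d * (i : ℤ) := by positivity
      have h8 : ((M - r) / d + 1) * d = d * ((M - r) / d + 1) := mul_comm _ _
      linarith
    · have h3 : (M - r) / d + 1 + (i : ℤ) ≤ (N - r) / d := by omega
      have h4 : ((M - r) / d + 1 + (i : ℤ)) * d ≤ N - r := (Int.le_ediv_iff_mul_le hd).mp h3
      have h5 : d * ((M - r) / d + 1) + d * (i : ℤ) = ((M - r) / d + 1 + (i : ℤ)) * d := by ring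
      linarith

lemma aux_resClass_ncard (r d M N : ℤ) (hd : 0 < d) :
    ({z : ℤ | d ∣ z - r} ∩ Set.Ioc M N).ncard = ((N - r) / d - (M - r) / d).toNat := by
  rw [aux_resClass_eq r d M N hd]
  have hinj : Function.Injective (fun i : ℕ => (r + d * ((M - r) / d + 1)) + d * (i : ℤ)) := by
    intro i j hij
    simp only at hij
    have h1 : d * (i : ℤ) = d * (j : ℤ) := by linarith
    have h2 := mul_left_cancel₀ hd.ne' h1
    exact_mod_cast h2
  rw [Set.ncard_image_of_injective _ hinj]
  have hset : {i : ℕ | i < ((N - r) / d - (M - r) / d).toNat} =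
      ↑(Finset.range (((N - r) / d - (M - r) / d).toNat)) := by
    ext i; simp
  rw [hset, Set.ncard_coe_finset, Finset.card_range]

/-- Lower bound for the count of a residue class in a long interval. -/
lemma aux_resClass_lb (r d M : ℤ) (hd : 0 < d) (m K : ℕ) (h : (K : ℤ) * d ≤ (m : ℤ)) :
    K ≤ cnt {z : ℤ | d ∣ z - r} M m := by
  unfold cnt
  rw [aux_resClass_ncard r d M (M + m) hd]
  have hq : (M - r) / d * d ≤ M - r := by
    have h1 := Int.mul_ediv_add_emod (M - r) d
    have h2 := Int.emod_nonneg (M - r) hd.ne'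
    have h3 : d * ((M - r) / d) = (M - r) / d * d := mul_comm _ _
    linarith
  have h4 : ((M - r) / d + (K : ℤ)) * d ≤ M + (m : ℤ) - r := by
    have : ((M - r) / d + (K : ℤ)) * d = (M - r) / d * d + (K : ℤ) * d := by ring
    linarith
  have h5 : (M - r) / d + (K : ℤ) ≤ (M + (m : ℤ) - r) / d := (Int.le_ediv_iff_mul_le hd).mpr h4
  omega

lemma aux_cnt_mono {A B : Set ℤ} (h : A ⊆ B) (M : ℤ) (m : ℕ) : cnt A M m ≤ cnt B M m :=
  Set.ncard_le_ncard (Set.inter_subset_inter_left _ h)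
    ((Set.finite_Ioc M (M + m)).subset Set.inter_subset_right)

/-- The integer points of a `p`-adic ball form a residue class. -/
lemma aux_ball_char (x : ℤ_[p]) (n : ℕ) :
    proj p (pball p x n) = {z : ℤ | ((p : ℤ) ^ n) ∣ z - (x.appr n : ℤ)} := by
  have key : ∀ a b : ℤ_[p], ‖a‖ ≤ (p : ℝ) ^ (-(n : ℤ)) → ‖b‖ ≤ (p : ℝ) ^ (-(n : ℤ)) →
      ‖a - b‖ ≤ (p : ℝ) ^ (-(n : ℤ)) := by
    intro a b ha hb
    rw [sub_eq_add_neg]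
    exact le_trans (PadicInt.nonarchimedean _ _) (max_le ha (by rwa [norm_neg]))
  have hr : ‖x - ((x.appr n : ℤ) : ℤ_[p])‖ ≤ (p : ℝ) ^ (-(n : ℤ)) := by
    rw [PadicInt.norm_le_pow_iff_mem_span_pow]
    push_cast
    exact PadicInt.appr_spec n x
  ext z
  simp only [proj, pball, Set.mem_setOf_eq, Metric.mem_closedBall, dist_eq_norm]
  rw [← PadicInt.norm_int_le_pow_iff_dvd]
  constructor
  · intro h
    have he : ((z - (x.appr n : ℤ) : ℤ) : ℤ_[p]) =
        ((z : ℤ_[p]) - x) - (((x.appr n : ℤ) : ℤ_[p]) - x) := by push_cast; ring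
    rw [he]
    refine key _ _ h ?_
    rwa [norm_sub_rev]
  · intro h
    have he : (z : ℤ_[p]) - x =
        ((z - (x.appr n : ℤ) : ℤ) : ℤ_[p]) - (((x.appr n : ℤ) : ℤ_[p]) - x) * (-1) := by
      push_cast; ring
    rw [he]
    refine key _ _ h ?_
    rw [mul_neg_one, norm_neg, norm_sub_rev]
    exact hr

/-- If `η_s(F;x) > 0` for some `x ∈ ℤ_p`, then for an unbounded sequence `{n_j}`
the set `F ∩ ℤ` is `s`-abundant in arithmetic progressions with common difference `p^{n_j}`. -/
theorem abundance_of_eta_pos (s : ℝ) (hs : 0 < s) (F : Set ℤ_[p])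
    (x : ℤ_[p]) (hx : 0 < eta p s F x) :
    ∃ nj : ℕ → ℕ, (∀ N : ℕ, ∃ j : ℕ, N ≤ nj j) ∧
    ∃ c : ℝ, 0 < c ∧ ∃ A : ℕ → Set ℤ,
      (∀ k : ℕ, ∃ j : ℕ, IsAPWithDiff (A k) ((p : ℤ) ^ (nj j))) ∧
      (∀ k : ℕ, (A k).ncard < (A (k + 1)).ncard) ∧
      (∀ k : ℕ, c * ((A k).ncard : ℝ) ^ s ≤ ((proj p F ∩ A k).ncard : ℝ)) := by
  classical
  obtain ⟨δ, hδ0, hδlt⟩ := exists_between hx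
  have hδtop : δ ≠ ⊤ := hδlt.ne_top
  have hδlt' : δ < Filter.atTop.limsup (fun n : ℕ => etaN p s F x n) := hδlt
  have h1 : ∃ᶠ n in atTop, δ < etaN p s F x n :=
    Filter.frequently_lt_of_lt_limsup (by isBoundedDefault) hδlt'
  obtain ⟨n0, hn0⟩ := h1.exists
  set P : Set ℤ := proj p F with hP
  set B : Set ℤ := proj p (pball p x n0) with hBdef
  have hd : (0 : ℤ) < (p : ℤ) ^ n0 :=
    pow_pos (by exact_mod_cast (Fact.out : p.Prime).pos) n0
  have hB : B = {z : ℤ | ((p : ℤ) ^ n0) ∣ z - (x.appr n0 : ℤ)} := aux_ball_char p x n0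
  -- key selection of good intervals
  have key : ∀ ℓ : ℕ, ∃ q : ℕ × ℤ, ℓ ≤ q.1 ∧
      δ * ((cnt B q.2 q.1 : ℝ≥0∞)) ^ s < (cnt (P ∩ B) q.2 q.1 : ℝ≥0∞) := by
    intro ℓ
    have h2 : δ < Filter.atTop.limsup
        (fun m : ℕ => ⨆ M : ℤ, (cnt (P ∩ B) M m : ℝ≥0∞) / (cnt B M m : ℝ≥0∞) ^ s) := hn0
    have h3 := Filter.frequently_lt_of_lt_limsup (by isBoundedDefault) h2
    obtain ⟨m, hm, h4⟩ := Filter.frequently_atTop.mp h3 ℓ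
    rw [lt_iSup_iff] at h4
    obtain ⟨M, h5⟩ := h4
    refine ⟨(m, M), hm, ?_⟩
    rcases Nat.eq_zero_or_pos (cnt B M m) with h0 | hpos
    · exfalso
      have hle := aux_cnt_mono (Set.inter_subset_right : P ∩ B ⊆ B) M m
      have hsub : cnt (P ∩ B) M m = 0 := by omega
      rw [h0, hsub] at h5
      simp [ENNReal.zero_rpow_of_pos hs] at h5
    · have hb0 : ((cnt B M m : ℝ≥0∞)) ^ s ≠ 0 := by
        rw [Ne, ENNReal.rpow_eq_zero_iff_of_pos hs]
        exact_mod_cast hpos.ne'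
      have hbt : ((cnt B M m : ℝ≥0∞)) ^ s ≠ ⊤ :=
        ENNReal.rpow_ne_top_of_nonneg hs.le (by simp)
      exact (ENNReal.lt_div_iff_mul_lt (Or.inl hb0) (Or.inl hbt)).mp h5
  -- recursive construction
  set g : ℕ → ℕ × ℤ := fun k => Nat.rec (Classical.choose (key 0))
    (fun _ q => Classical.choose (key ((cnt B q.2 q.1 + 1) * p ^ n0))) k with hgdef
  have hgsucc : ∀ k : ℕ,
      g (k + 1) = Classical.choose (key ((cnt B (g k).2 (g k).1 + 1) * p ^ n0)) := fun _ => rfl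
  have hg2 : ∀ k, δ * ((cnt B (g k).2 (g k).1 : ℝ≥0∞)) ^ s
      < (cnt (P ∩ B) (g k).2 (g k).1 : ℝ≥0∞) := by
    intro k
    cases k with
    | zero => exact (Classical.choose_spec (key 0)).2
    | succ k =>
      rw [hgsucc k]
      exact (Classical.choose_spec (key _)).2
  have hmono : ∀ k, cnt B (g k).2 (g k).1 < cnt B (g (k + 1)).2 (g (k + 1)).1 := by
    intro k
    have h6 : (cnt B (g k).2 (g k).1 + 1) * p ^ n0 ≤ (g (k + 1)).1 := by
      rw [hgsucc k]
      exact (Classical.choose_spec (key _)).1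
    have h7 : ((cnt B (g k).2 (g k).1 + 1 : ℕ) : ℤ) * ((p : ℤ) ^ n0) ≤ ((g (k + 1)).1 : ℤ) := by
      exact_mod_cast h6
    have h8 := aux_resClass_lb (x.appr n0 : ℤ) ((p : ℤ) ^ n0) (g (k + 1)).2 hd
      (g (k + 1)).1 (cnt B (g k).2 (g k).1 + 1) h7
    rw [← hB] at h8
    omega
  refine ⟨fun j => n0 + j, fun N => ⟨N, Nat.le_add_left N n0⟩, δ.toReal,
    ENNReal.toReal_pos hδ0.ne' hδtop,
    fun k => B ∩ Set.Ioc (g k).2 ((g k).2 + ((g k).1 : ℤ)), ?_, ?_, ?_⟩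
  · intro k
    refine ⟨0, ?_⟩
    show IsAPWithDiff (B ∩ Set.Ioc (g k).2 ((g k).2 + ((g k).1 : ℤ))) ((p : ℤ) ^ (n0 + 0))
    rw [Nat.add_zero, hB]
    exact ⟨_, _, aux_resClass_eq (x.appr n0 : ℤ) ((p : ℤ) ^ n0) (g k).2
      ((g k).2 + ((g k).1 : ℤ)) hd⟩
  · intro k
    exact hmono k
  · intro k
    have h8 := (hg2 k).le
    have h9 : δ.toReal * ((cnt B (g k).2 (g k).1 : ℝ)) ^ s
        ≤ (cnt (P ∩ B) (g k).2 (g k).1 : ℝ) := by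
      have h10 := ENNReal.toReal_mono (by simp) h8
      rwa [ENNReal.toReal_mul, ← ENNReal.toReal_rpow, ENNReal.toReal_natCast,
        ENNReal.toReal_natCast] at h10
    have hEq : P ∩ (B ∩ Set.Ioc (g k).2 ((g k).2 + ((g k).1 : ℤ)))
        = (P ∩ B) ∩ Set.Ioc (g k).2 ((g k).2 + ((g k).1 : ℤ)) := (Set.inter_assoc _ _ _).symm
    rw [hEq]
    exact h9

end
end

section
/- Let p be a prime and define the shift map σ on ℕ by: for n ∈ ℕ with base-p expansion n = Σ_{i=0}^{k} a_i p^i (a_k the leading digit, k ≥ 1), σ(n) = n − a_k p^k, and σ(n) = 0 for n ∈ {0,1,…,p−1}. If E ⊆ ℕ is σ-invariant, i.e. σ(E) ⊆ E, then E = 𝓕_p(E) ∩ ℕ. -/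
open MeasureTheory Filter Set Metric
open scoped ENNReal NNReal

noncomputable section

variable (p : ℕ) [Fact p.Prime]

/-! Stripping leading digits one at a time shows that a σ-invariant `E` is closed under every
reduction `n ↦ n % p ^ j`. If `m` lies in the `p`-adic closure of `E`, some `n ∈ E` agrees with
`m` modulo `p ^ m > m`, so `m = n % p ^ m ∈ E`. -/

theorem Nat.mod_pow_mem_of_forall_mod_pow_log_mem {b : ℕ} (hb : 1 < b) {E : Set ℕ}
    (hE : ∀ n ∈ E, n % b ^ Nat.log b n ∈ E) {n : ℕ} (hn : n ∈ E) (j : ℕ) :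
    n % b ^ j ∈ E := by
  induction n using Nat.strong_induction_on with
  | _ n ih =>
    rcases lt_or_ge n (b ^ j) with hlt | hle
    · rwa [Nat.mod_eq_of_lt hlt]
    · have hn0 : n ≠ 0 := (pow_pos (by omega : 0 < b) j).trans_le hle |>.ne'
      have hj : j ≤ Nat.log b n := Nat.le_log_of_pow_le hb hle
      have hshift : n % b ^ Nat.log b n < n :=
        (Nat.mod_lt _ (pow_pos (by omega) _)).trans_le (Nat.pow_log_le_self b hn0)
      have := ih _ hshift (hE n hn)
      rwa [Nat.mod_mod_of_dvd _ (pow_dvd_pow b hj)] at this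

theorem PadicInt.exists_modEq_of_natCast_mem_closure {E : Set ℕ} {m : ℕ}
    (hm : (m : ℤ_[p]) ∈ closure ((fun n : ℕ => (n : ℤ_[p])) '' E)) (k : ℕ) :
    ∃ n ∈ E, n ≡ m [MOD p ^ k] := by
  have hε : (0 : ℝ) < (p : ℝ) ^ (-(k : ℤ)) :=
    zpow_pos (by exact_mod_cast (Fact.out : p.Prime).pos) _
  obtain ⟨_, ⟨n, hn, rfl⟩, hdist⟩ := Metric.mem_closure_iff.mp hm _ hε
  refine ⟨n, hn, Nat.modEq_iff_dvd.mpr ?_⟩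
  have hnorm : ‖(((m : ℤ) - n : ℤ) : ℤ_[p])‖ ≤ (p : ℝ) ^ (-(k : ℤ)) := by
    rw [dist_eq_norm] at hdist
    push_cast
    exact hdist.le
  exact_mod_cast PadicInt.norm_int_le_pow_iff_dvd.mp hnorm

/-- If `E ⊆ ℕ` is invariant under deleting the leading base-`p` digit,
then `E = 𝓕_p(E) ∩ ℕ`. -/
theorem shift_invariant_is_projection (E : Set ℕ)
    (hσ : ∀ n ∈ E, n % p ^ (Nat.log p n) ∈ E) :
    E = {m : ℕ | (m : ℤ_[p]) ∈ closure ((fun m : ℕ => (m : ℤ_[p])) '' E)} := by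
  refine Set.Subset.antisymm (fun m hm => subset_closure ⟨m, hm, rfl⟩) fun m hm => ?_
  have hp : 1 < p := (Fact.out : p.Prime).one_lt
  obtain ⟨n, hn, hnm⟩ := PadicInt.exists_modEq_of_natCast_mem_closure p hm m
  have hm_eq : n % p ^ m = m := Eq.trans hnm (Nat.mod_eq_of_lt (Nat.lt_pow_self hp))
  exact hm_eq ▸ Nat.mod_pow_mem_of_forall_mod_pow_log_mem hp hσ hn m

end
end

section
/- Let p be a prime and ℙ the set of prime numbers, viewed as a subset of ℤ_p. Then the p-adic closure of ℙ equals 𝕌 ∪ {p}, where 𝕌 = {x ∈ ℤ_p : |x|_p = 1} is the group of units of ℤ_p; consequently μ_p(𝓕_p(ℙ)) = 1 − 1/p, where μ_p is the Haar probability measure on ℤ_p. -/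
open MeasureTheory Filter Set Metric
open scoped ENNReal NNReal

noncomputable section

variable (p : ℕ) [Fact p.Prime]

open scoped Topology in
lemma nhdsWithin_ne_zero_neBot : (𝓝[≠] (0 : ℤ_[p])).NeBot := by
  rw [← mem_closure_iff_nhdsWithin_neBot]
  rw [Metric.mem_closure_iff]
  intro ε hε
  have hp : p.Prime := Fact.out
  have hp1 : (p : ℝ)⁻¹ < 1 := by
    rw [inv_lt_one_iff₀]; right; exact_mod_cast hp.one_lt
  obtain ⟨n, hn⟩ := exists_pow_lt_of_lt_one hε hp1
  refine ⟨(p : ℤ_[p]) ^ n, ?_, ?_⟩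
  · simp only [Set.mem_compl_iff, Set.mem_singleton_iff]
    intro h
    have := PadicInt.norm_p_pow (p := p) n
    rw [h, norm_zero] at this
    have hppos : (0:ℝ) < (p:ℝ) := by exact_mod_cast hp.pos
    have h2 : (0:ℝ) < (p:ℝ) ^ (-n : ℤ) := zpow_pos hppos _
    rw [← this] at h2
    exact lt_irrefl _ h2
  · rw [dist_eq_norm, zero_sub, norm_neg, PadicInt.norm_p_pow]
    rwa [zpow_neg, zpow_natCast, ← inv_pow]

lemma ball_measure (μ : Measure ℤ_[p]) [μ.IsAddHaarMeasure] [IsProbabilityMeasure μ] :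
    μ {x : ℤ_[p] | ‖x‖ < 1} = 1 / (p : ℝ≥0∞) := by
  have hp : p.Prime := Fact.out
  set B : Set ℤ_[p] := {x : ℤ_[p] | ‖x‖ < 1} with hB
  have hBmeas : MeasurableSet B := by
    have : B = Metric.ball (0 : ℤ_[p]) 1 := by
      ext x; simp [hB, Metric.mem_ball, dist_eq_norm]
    rw [this]; exact Metric.isOpen_ball.measurableSet
  have hBker : B = PadicInt.toZMod ⁻¹' {(0 : ZMod p)} := by
    ext x
    simp only [hB, Set.mem_setOf_eq, Set.mem_preimage, Set.mem_singleton_iff]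
    rw [← RingHom.mem_ker, PadicInt.ker_toZMod, IsLocalRing.mem_maximalIdeal,
      PadicInt.mem_nonunits]
  have fiber_eq : ∀ a : ZMod p, PadicInt.toZMod ⁻¹' {a} =
      (fun x : ℤ_[p] => -(ZMod.val a : ℤ_[p]) + x) ⁻¹' (PadicInt.toZMod ⁻¹' {(0 : ZMod p)}) := by
    intro a
    ext x
    simp only [Set.mem_preimage, Set.mem_singleton_iff, map_add, map_neg, map_natCast,
      ZMod.natCast_zmod_val, neg_add_eq_zero]
    exact comm
  have fiber_meas : ∀ a : ZMod p, MeasurableSet (PadicInt.toZMod ⁻¹' {a} : Set ℤ_[p]) := by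
    intro a
    rw [fiber_eq a, ← hBker]
    exact hBmeas.preimage (measurable_const_add _)
  have fiber_measure : ∀ a : ZMod p, μ (PadicInt.toZMod ⁻¹' {a}) = μ B := by
    intro a
    rw [fiber_eq a, ← hBker]
    exact measure_preimage_add μ _ _
  have huniv : (Set.univ : Set ℤ_[p]) = ⋃ a : ZMod p, PadicInt.toZMod ⁻¹' {a} := by
    ext x; simp
  have hdisj : Pairwise (Function.onFun Disjoint
      fun a : ZMod p => (PadicInt.toZMod ⁻¹' {a} : Set ℤ_[p])) := by
    intro a b hab
    simp only [Function.onFun]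
    apply Set.disjoint_left.mpr
    intro x hxa hxb
    simp only [Set.mem_preimage, Set.mem_singleton_iff] at hxa hxb
    exact hab (hxa ▸ hxb)
  have h1 : (1 : ℝ≥0∞) = (p : ℝ≥0∞) * μ B := by
    have := measure_univ (μ := μ)
    rw [huniv, measure_iUnion hdisj fiber_meas] at this
    calc (1:ℝ≥0∞) = ∑' a : ZMod p, μ (PadicInt.toZMod ⁻¹' {a}) := this.symm
      _ = ∑' _ : ZMod p, μ B := by exact tsum_congr fiber_measure
      _ = (p : ℝ≥0∞) * μ B := by
            rw [tsum_fintype, Finset.sum_const, Finset.card_univ, ZMod.card, nsmul_eq_mul]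
  have := (ENNReal.eq_div_iff (a := (p : ℝ≥0∞)) (by exact_mod_cast hp.ne_zero)
    (by simp)).mpr h1.symm
  rw [this, one_div]

/-- The `p`-adic closure of the set of primes is `𝕌 ∪ {p}`, and its Haar measure
is `1 - 1/p`. -/
theorem closure_primes (μ : Measure ℤ_[p]) [μ.IsAddHaarMeasure] [IsProbabilityMeasure μ] :
    closure ((fun q : ℕ => (q : ℤ_[p])) '' {q : ℕ | q.Prime}) =
      {x : ℤ_[p] | ‖x‖ = 1} ∪ {(p : ℤ_[p])} ∧
    μ (closure ((fun q : ℕ => (q : ℤ_[p])) '' {q : ℕ | q.Prime})) = 1 - 1 / (p : ℝ≥0∞) := by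
  have hp : p.Prime := Fact.out
  haveI : (nhdsWithin (0 : ℤ_[p]) {(0 : ℤ_[p])}ᶜ).NeBot := nhdsWithin_ne_zero_neBot p
  set S := (fun q : ℕ => (q : ℤ_[p])) '' {q : ℕ | q.Prime} with hS
  have hclosure : closure S = {x : ℤ_[p] | ‖x‖ = 1} ∪ {(p : ℤ_[p])} := by
    apply subset_antisymm
    · apply closure_minimal
      · rintro _ ⟨q, hq, rfl⟩
        by_cases h : (p : ℤ) ∣ (q : ℤ)
        · right
          have hpq : p ∣ q := by exact_mod_cast h
          have hqp : q = p := ((Nat.prime_dvd_prime_iff_eq hp hq).mp hpq).symm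
          simp [hqp]
        · left
          have h1 : ¬ ‖((q : ℤ) : ℤ_[p])‖ < 1 := fun hc =>
            h ((PadicInt.norm_int_lt_one_iff_dvd (q : ℤ)).mp hc)
          push_cast at h1
          exact le_antisymm (PadicInt.norm_le_one _) (not_lt.mp h1)
      · exact (isClosed_singleton.preimage continuous_norm).union isClosed_singleton
    · rintro x (hx | hx)
      · rw [Metric.mem_closure_iff]
        intro ε hε
        have hp1 : (p : ℝ)⁻¹ < 1 := by
          rw [inv_lt_one_iff₀]; right; exact_mod_cast hp.one_lt
        obtain ⟨n, hn⟩ := exists_pow_lt_of_lt_one hε hp1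
        haveI : NeZero (p ^ n) := ⟨pow_ne_zero n hp.ne_zero⟩
        have hux : IsUnit x := PadicInt.isUnit_iff.mpr hx
        have ha : IsUnit (PadicInt.toZModPow n x) := hux.map _
        obtain ⟨q, _, hq2, hq3⟩ := Nat.forall_exists_prime_gt_and_eq_mod ha 0
        refine ⟨(q : ℤ_[p]), ⟨q, hq2, rfl⟩, ?_⟩
        rw [dist_eq_norm]
        have hker : PadicInt.toZModPow n (x - (q : ℤ_[p])) = 0 := by
          rw [map_sub, map_natCast, hq3, sub_self]
        have hmem : x - (q : ℤ_[p]) ∈ Ideal.span {(p : ℤ_[p]) ^ n} := by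
          rw [← PadicInt.ker_toZModPow]; exact hker
        calc ‖x - (q : ℤ_[p])‖ ≤ (p : ℝ) ^ (-(n : ℤ)) :=
              (PadicInt.norm_le_pow_iff_mem_span_pow _ n).mpr hmem
          _ = ((p : ℝ)⁻¹) ^ n := by rw [zpow_neg, zpow_natCast, inv_pow]
          _ < ε := hn
      · rw [Set.mem_singleton_iff] at hx
        subst hx
        exact subset_closure ⟨p, hp, rfl⟩
  refine ⟨hclosure, ?_⟩
  rw [hclosure]
  set B : Set ℤ_[p] := {x : ℤ_[p] | ‖x‖ < 1} with hB
  have hBmeas : MeasurableSet B := by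
    have : B = Metric.ball (0 : ℤ_[p]) 1 := by
      ext x; simp [hB, Metric.mem_ball, dist_eq_norm]
    rw [this]; exact Metric.isOpen_ball.measurableSet
  have hcompl : {x : ℤ_[p] | ‖x‖ = 1} = Bᶜ := by
    ext x
    simp only [Set.mem_setOf_eq, Set.mem_compl_iff, hB, not_lt]
    constructor
    · intro h; rw [h]
    · intro h; exact le_antisymm (PadicInt.norm_le_one x) h
  have hsing : μ {(p : ℤ_[p])} = 0 := measure_singleton _
  have hUnion : μ ({x : ℤ_[p] | ‖x‖ = 1} ∪ {(p : ℤ_[p])}) = μ {x : ℤ_[p] | ‖x‖ = 1} := by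
    apply le_antisymm
    · calc μ ({x : ℤ_[p] | ‖x‖ = 1} ∪ {(p : ℤ_[p])})
          ≤ μ {x : ℤ_[p] | ‖x‖ = 1} + μ {(p : ℤ_[p])} := measure_union_le _ _
        _ = μ {x : ℤ_[p] | ‖x‖ = 1} := by rw [hsing, add_zero]
    · exact measure_mono Set.subset_union_left
  rw [hUnion, hcompl, measure_compl hBmeas (measure_ne_top μ B), measure_univ,
    ball_measure p μ]

end
end
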